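/- arXiv:1506.08235 — 2 statements merged into one kernel-verified Lean document; each statement's English description precedes it below -/
import Mathlib

section
/- (Optimal divider cascading) Fix a monotone cost f and a seed count m ≥ 2, and for a prefix P of the read define D(P) as the smallest divider position i achieving the minimum of Opt(P[0,i), m-1) + Opt(P[i,|P|), 1). If P1 and P2 are prefixes of the read with |P2| ≤ |P1|, and f additionally satisfies the extension inequality freq(E1++S2) - freq(E1++S2++E2) ≤ freq(S2) - freq(S2++E2) for all strings E1, S2, E2, then D(P2) ≤ D(P1). -/
/-- A placement of seeds in a string `u`: a list of intervals `(a, b)` denoting positions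
`[a, b)`, each nonempty, within bounds, pairwise disjoint and in order. -/
def ValidPlacement {α : Type*} (u : List α) (ivs : List (ℕ × ℕ)) : Prop :=
  (∀ p ∈ ivs, p.1 < p.2 ∧ p.2 ≤ u.length) ∧ ivs.Chain' (fun p q => p.2 ≤ q.1)

/-- The total frequency (cost) of a placement: the sum of `f` over the substrings of `u`
cut out by the intervals. -/
def cost {α : Type*} (f : List α → ℕ) (u : List α) (ivs : List (ℕ × ℕ)) : ℕ :=
  (ivs.map fun p => f ((u.drop p.1).take (p.2 - p.1))).sum

/-- `Opt f u m`: the optimal (minimum) total cost over all placements of `m` seeds in `u`. -/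
noncomputable def Opt {α : Type*} (f : List α → ℕ) (u : List α) (m : ℕ) : ℕ :=
  sInf {c | ∃ ivs, ivs.length = m ∧ ValidPlacement u ivs ∧ c = cost f u ivs}

/-- `Opt1 f u`: the minimum of `f` over all nonempty contiguous substrings of `u`. -/
noncomputable def Opt1 {α : Type*} (f : List α → ℕ) (u : List α) : ℕ :=
  sInf {c | ∃ a b : ℕ, a < b ∧ b ≤ u.length ∧ c = f ((u.drop a).take (b - a))}

/-- A divider `i` for the `m`-seed problem on `P` is valid when the left part `P[0,i)` can
host `m - 1` seeds and the right part `P[i,|P|)` can host one seed. -/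
def ValidDiv {α : Type*} (m : ℕ) (P : List α) (i : ℕ) : Prop :=
  m - 1 ≤ i ∧ i < P.length

/-- The total cost of a division of `P` at `i`: optimal `(m-1)`-seed cost of the left part
plus optimal 1-seed cost of the right part. -/
noncomputable def divCost {α : Type*} (f : List α → ℕ) (m : ℕ) (P : List α) (i : ℕ) : ℕ :=
  Opt f (P.take i) (m - 1) + Opt1 f (P.drop i)

private lemma opt1_le {α : Type*} (f : List α → ℕ) (u : List α) {a b : ℕ}
    (h1 : a < b) (h2 : b ≤ u.length) : Opt1 f u ≤ f ((u.drop a).take (b - a)) :=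
  Nat.sInf_le ⟨a, b, h1, h2, rfl⟩

private lemma opt1_exists {α : Type*} (f : List α → ℕ) (u : List α) (hu : u ≠ []) :
    ∃ a b : ℕ, a < b ∧ b ≤ u.length ∧ Opt1 f u = f ((u.drop a).take (b - a)) := by
  have hne : {c | ∃ a b : ℕ, a < b ∧ b ≤ u.length ∧ c = f ((u.drop a).take (b - a))}.Nonempty :=
    ⟨f u, 0, u.length, List.length_pos_iff.2 hu, le_refl _, by simp⟩
  obtain ⟨a, b, h1, h2, h3⟩ := Nat.sInf_mem hne
  exact ⟨a, b, h1, h2, h3⟩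

private lemma sub_left {α : Type*} (u v : List α) {a b : ℕ} (ha : a ≤ u.length)
    (hb : b ≤ u.length) :
    ((u ++ v).drop a).take (b - a) = (u.drop a).take (b - a) := by
  have h0 : a - u.length = 0 := by omega
  have h1 : b - a - (u.length - a) = 0 := by omega
  rw [List.drop_append, h0, List.drop_zero, List.take_append,
    List.length_drop, h1, List.take_zero, List.append_nil]

private lemma sub_right {α : Type*} (u v : List α) {a b : ℕ} (ha : u.length ≤ a) :
    ((u ++ v).drop a).take (b - a)
      = (v.drop (a - u.length)).take ((b - u.length) - (a - u.length)) := by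
  have h0 : u.drop a = [] := List.drop_eq_nil_of_le ha
  have h2 : b - a = (b - u.length) - (a - u.length) := by omega
  rw [List.drop_append, h0, List.nil_append, h2]

private lemma claimC {α : Type*} (f : List α → ℕ)
    (hf : ∀ x s y : List α, f (x ++ s ++ y) ≤ f s)
    (hext : ∀ E1 S2 E2 : List α,
      f (E1 ++ S2) - f (E1 ++ S2 ++ E2) ≤ f S2 - f (S2 ++ E2))
    (w u' E : List α) (hu' : u' ≠ []) :
    Opt1 f (w ++ u') + Opt1 f (u' ++ E) ≤ Opt1 f u' + Opt1 f (w ++ u' ++ E) := by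
  obtain ⟨a', b', ha', hb', hs'⟩ := opt1_exists f u' hu'
  obtain ⟨a, b, hab, hble, hs⟩ := opt1_exists f (w ++ u' ++ E) (by simp [hu'])
  have hble' : b ≤ w.length + u'.length + E.length := by
    have h := hble; simp at h; omega
  -- f u' ≤ f s'
  have hdec : u' = u'.take a' ++ ((u'.drop a').take (b' - a') ++ u'.drop b') := by
    have h1 : (u'.drop a').take (b' - a') ++ (u'.drop a').drop (b' - a') = u'.drop a' :=
      List.take_append_drop _ _
    have h2 : (u'.drop a').drop (b' - a') = u'.drop b' := by
      rw [List.drop_drop]; congr 1; omega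
    rw [h2] at h1
    rw [h1, List.take_append_drop]
  have hfu' : f u' ≤ f ((u'.drop a').take (b' - a')) := by
    have h := hf (u'.take a') ((u'.drop a').take (b' - a')) (u'.drop b')
    rw [List.append_assoc, ← hdec] at h
    exact h
  rcases le_or_gt b (w.length + u'.length) with hcase1 | hcase1
  · -- s lies inside w ++ u'
    have e1 : ((w ++ u' ++ E).drop a).take (b - a) = ((w ++ u').drop a).take (b - a) :=
      sub_left (w ++ u') E (by simp; omega) (by simp; omega)
    have c1 : Opt1 f (w ++ u') ≤ f (((w ++ u' ++ E).drop a).take (b - a)) := by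
      rw [e1]; exact opt1_le f (w ++ u') hab (by simp; omega)
    have c2 : Opt1 f (u' ++ E) ≤ f ((u'.drop a').take (b' - a')) := by
      have h := opt1_le f (u' ++ E) ha' (by simp; omega)
      rwa [sub_left u' E (by omega) hb'] at h
    omega
  rcases le_or_gt w.length a with hcase2 | hcase2
  · -- s lies inside u' ++ E
    have e0 : ((w ++ u' ++ E).drop a).take (b - a)
        = ((u' ++ E).drop (a - w.length)).take ((b - w.length) - (a - w.length)) := by
      rw [List.append_assoc]; exact sub_right w (u' ++ E) hcase2
    have c2 : Opt1 f (u' ++ E) ≤ f (((w ++ u' ++ E).drop a).take (b - a)) := by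
      rw [e0]; exact opt1_le f (u' ++ E) (by omega) (by simp; omega)
    have c1 : Opt1 f (w ++ u') ≤ f ((u'.drop a').take (b' - a')) := by
      have h := opt1_le f (w ++ u') (a := w.length + a') (b := w.length + b')
        (by omega) (by simp; omega)
      rw [sub_right w u' (by omega)] at h
      have e1 : w.length + a' - w.length = a' := by omega
      have e2 : w.length + b' - w.length = b' := by omega
      rwa [e1, e2] at h
    omega
  · -- s crosses: s = (w.drop a) ++ u' ++ e  with e = E.take (b - w.length - u'.length)
    have hwd : (w ++ u').drop a = w.drop a ++ u' := by
      have h0 : a - w.length = 0 := by omega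
      rw [List.drop_append, h0, List.drop_zero]
    have h1 : (w ++ u' ++ E).drop a = (w.drop a ++ u') ++ E := by
      have h0 : a - (w ++ u').length = 0 := by simp; omega
      rw [List.drop_append, hwd, h0, List.drop_zero]
    have h2 : ((w.drop a ++ u') ++ E).take (b - a)
        = (w.drop a ++ u') ++ E.take (b - w.length - u'.length) := by
      rw [List.take_append, List.take_of_length_le (by simp; omega)]
      congr 2
      simp; omega
    have e_sub : ((w ++ u' ++ E).drop a).take (b - a)
        = (w.drop a ++ u') ++ E.take (b - w.length - u'.length) := by
      rw [h1, h2]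
    -- candidate for w ++ u' : the suffix  w.drop a ++ u'
    have cA : Opt1 f (w ++ u') ≤ f (w.drop a ++ u') := by
      have h := opt1_le f (w ++ u') (a := a) (b := w.length + u'.length)
        (by omega) (by simp)
      rw [hwd] at h
      rwa [List.take_of_length_le (by simp; omega)] at h
    -- candidate for u' ++ E : the prefix  u' ++ e
    have cB : Opt1 f (u' ++ E) ≤ f (u' ++ E.take (b - w.length - u'.length)) := by
      have h := opt1_le f (u' ++ E) (a := 0) (b := b - w.length)
        (by omega) (by simp; omega)
      rw [List.drop_zero, Nat.sub_zero, List.take_append,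
        List.take_of_length_le (by omega)] at h
      have e2 : b - w.length - u'.length = b - w.length - u'.length := rfl
      exact h
    have key := hext (w.drop a) u' (E.take (b - w.length - u'.length))
    have m1 : f ((w.drop a ++ u') ++ E.take (b - w.length - u'.length))
        ≤ f (w.drop a ++ u') := by
      have h := hf [] (w.drop a ++ u') (E.take (b - w.length - u'.length))
      simpa using h
    have m2 : f (u' ++ E.take (b - w.length - u'.length)) ≤ f u' := by
      have h := hf [] u' (E.take (b - w.length - u'.length))
      simpa using h
    rw [e_sub] at hs
    have key' : f (w.drop a ++ u') - f ((w.drop a ++ u') ++ E.take (b - w.length - u'.length))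
        ≤ f u' - f (u' ++ E.take (b - w.length - u'.length)) := by
      have h := key
      rwa [show w.drop a ++ u' ++ E.take (b - w.length - u'.length)
        = (w.drop a ++ u') ++ E.take (b - w.length - u'.length) from rfl] at h
    omega

/-- Optimal divider cascading: for a monotone cost `f` satisfying the extension inequality,
and two prefixes `P2 = R[0,n2)`, `P1 = R[0,n1)` of the read with `n2 ≤ n1`, the first
(smallest) optimal divider `D2` of the shorter prefix is no further right than the first
optimal divider `D1` of the longer prefix. -/
theorem optimal_divider_cascading {α : Type*} (f : List α → ℕ)
    (hf : ∀ x s y : List α, f (x ++ s ++ y) ≤ f s)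
    (hext : ∀ E1 S2 E2 : List α,
      f (E1 ++ S2) - f (E1 ++ S2 ++ E2) ≤ f S2 - f (S2 ++ E2))
    (R : List α) (m n1 n2 : ℕ) (hm : 2 ≤ m)
    (hn2 : m ≤ n2) (h21 : n2 ≤ n1) (h1 : n1 ≤ R.length)
    (D1 D2 : ℕ)
    (hD1 : IsLeast {i | ValidDiv m (R.take n1) i ∧
      ∀ j, ValidDiv m (R.take n1) j →
        divCost f m (R.take n1) i ≤ divCost f m (R.take n1) j} D1)
    (hD2 : IsLeast {i | ValidDiv m (R.take n2) i ∧
      ∀ j, ValidDiv m (R.take n2) j →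
        divCost f m (R.take n2) i ≤ divCost f m (R.take n2) j} D2) :
    D2 ≤ D1 := by
  obtain ⟨⟨hv1, hopt1⟩, hlb1⟩ := hD1
  obtain ⟨⟨hv2, hopt2⟩, hlb2⟩ := hD2
  by_contra hcon
  push_neg at hcon
  have hlenR : n2 ≤ R.length := le_trans h21 h1
  have hP2len : (R.take n2).length = n2 := by rw [List.length_take]; omega
  have hP1len : (R.take n1).length = n1 := by rw [List.length_take]; omega
  have hD2lt : D2 < n2 := by have h := hv2.2; rwa [hP2len] at h
  have hD1lt : D1 < n2 := lt_trans hcon hD2lt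
  set E := (R.take n1).drop n2 with hE
  have hsplit : R.take n1 = R.take n2 ++ E := by
    rw [hE]
    conv_lhs => rw [← List.take_append_drop n2 (R.take n1)]
    congr 1
    rw [List.take_take, min_eq_left h21]
  have htake : ∀ i, i ≤ n2 → (R.take n1).take i = (R.take n2).take i := by
    intro i hi
    rw [List.take_take, List.take_take, min_eq_left (by omega), min_eq_left (by omega)]
  have hdrop : ∀ i, i ≤ n2 → (R.take n1).drop i = (R.take n2).drop i ++ E := by
    intro i hi
    rw [hsplit, List.drop_append]
    have h0 : i - (R.take n2).length = 0 := by rw [hP2len]; omega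
    rw [h0, List.drop_zero]
  have hdc : ∀ i, i ≤ n2 → divCost f m (R.take n1) i
      = Opt f ((R.take n2).take i) (m - 1) + Opt1 f ((R.take n2).drop i ++ E) := by
    intro i hi
    simp only [divCost]
    rw [htake i hi, hdrop i hi]
  have hvD1_2 : ValidDiv m (R.take n2) D1 := ⟨hv1.1, by rw [hP2len]; exact hD1lt⟩
  have hvD2_1 : ValidDiv m (R.take n1) D2 := ⟨hv2.1, by rw [hP1len]; omega⟩
  have hsplit2 : (R.take n2).drop D1
      = ((R.take n2).drop D1).take (D2 - D1) ++ (R.take n2).drop D2 := by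
    conv_lhs => rw [← List.take_append_drop (D2 - D1) ((R.take n2).drop D1)]
    congr 1
    rw [List.drop_drop]
    congr 1
    omega
  have hu'ne : (R.take n2).drop D2 ≠ [] := by
    have hl : ((R.take n2).drop D2).length = n2 - D2 := by rw [List.length_drop, hP2len]
    intro h
    rw [h] at hl
    simp at hl
    omega
  have hC := claimC f hf hext (((R.take n2).drop D1).take (D2 - D1)) ((R.take n2).drop D2)
    E hu'ne
  rw [← hsplit2] at hC
  refine absurd (hlb2 ⟨hvD1_2, fun j hj => ?_⟩) (by omega)
  have k4 := hopt2 j hj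
  have k1 := hopt1 D2 hvD2_1
  have k2 := hopt2 D1 hvD1_2
  rw [hdc D1 hD1lt.le, hdc D2 hD2lt.le] at k1
  simp only [divCost] at k2 k4 ⊢
  omega
end

section
/- For any cost function f and any m ≥ 1, Opt(u, m) computed by the dynamic-programming recurrence (Opt(u, k+1) = min over dividers i of Opt(u[0,i), k) + Opt(u[i,|u|), 1), with base case Opt(u,1) = min of f over nonempty contiguous substrings of u) equals the true minimum total cost over all placements of m disjoint ordered seeds in u. In particular the dynamic program is correct. -/
/-- The dynamic program: `OptRec f 1 u` is the minimum of `f` over nonempty contiguous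
substrings of `u`, and `OptRec f (k+1) u` is the minimum over dividers `i` of
`OptRec f k (u[0,i)) + Opt1 f (u[i,|u|))`. -/
noncomputable def OptRec {α : Type*} (f : List α → ℕ) : ℕ → List α → ℕ
  | 0, _ => 0
  | 1, u => Opt1 f u
  | k + 2, u =>
      sInf {c | ∃ i, k + 1 ≤ i ∧ i < u.length ∧
        c = OptRec f (k + 1) (u.take i) + Opt1 f (u.drop i)}

/-
Cutting a placement of `m + 1` seeds just before its last seed splits it into a placement of `m`
seeds in a prefix `u[0,i)` and a single seed in the remaining suffix `u[i,|u|)`, and every such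
pair glues back to a placement. So the set of placement costs is the union over dividers `i` of
the sumsets of the two smaller cost sets; in `ℕ` the infimum of a sumset of nonempty sets is the
sum of the infima, and the infimum of a union is the least infimum of its nonempty members. The
sumset for `i` is nonempty exactly for the dividers `m ≤ i < |u|` the recurrence ranges over, so
the junk value `sInf ∅ = 0` never enters on either side.
-/

open scoped Pointwise

namespace Nat

theorem csInf_add {s t : Set ℕ} (hs : s.Nonempty) (ht : t.Nonempty) :
    sInf (s + t) = sInf s + sInf t :=
  le_antisymm (Nat.sInf_le (Set.add_mem_add (Nat.sInf_mem hs) (Nat.sInf_mem ht))) <|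
    le_csInf (hs.add ht) fun _ ⟨_, ha, _, hb, hab⟩ =>
      hab ▸ add_le_add (Nat.sInf_le ha) (Nat.sInf_le hb)

theorem sInf_iUnion {ι : Type*} (S : ι → Set ℕ) :
    sInf (⋃ i, S i) = sInf {c | ∃ i, (S i).Nonempty ∧ c = sInf (S i)} := by
  by_cases h : (⋃ i, S i).Nonempty
  · obtain ⟨i, hi⟩ := Set.mem_iUnion.1 (Nat.sInf_mem h)
    refine le_antisymm ?_ ?_
    · refine le_csInf ⟨_, i, ⟨_, hi⟩, rfl⟩ ?_
      rintro _ ⟨j, hj, rfl⟩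
      exact csInf_le_csInf (OrderBot.bddBelow _) hj (Set.subset_iUnion S j)
    · exact le_trans (Nat.sInf_le ⟨i, ⟨_, hi⟩, rfl⟩) (Nat.sInf_le hi)
  · have hS : ∀ i, S i = ∅ := fun i =>
      Set.eq_empty_of_forall_notMem fun x hx => h ⟨x, Set.mem_iUnion.2 ⟨i, hx⟩⟩
    simp [hS]

end Nat

section Placements

variable {α : Type*} (f : List α → ℕ)

theorem ValidPlacement.pairwise {u : List α} {ivs : List (ℕ × ℕ)}
    (h : ValidPlacement u ivs) : ivs.Pairwise fun p q => p.2 ≤ q.1 := by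
  let R : ℕ × ℕ → ℕ × ℕ → Prop := fun p q => p.2 ≤ q.1 ∧ q.1 < q.2
  have : Trans R R R := ⟨fun hpq hqr => ⟨by omega, hqr.2⟩⟩
  have hR : ivs.IsChain R := h.2.imp_of_mem_imp fun _ q _ hq hpq => ⟨hpq, (h.1 q hq).1⟩
  exact hR.pairwise.imp And.left

theorem ValidPlacement.length_le {u : List α} {ivs : List (ℕ × ℕ)}
    (h : ValidPlacement u ivs) : ivs.length ≤ u.length := by
  have hstarts : (ivs.map Prod.fst).Pairwise (· < ·) :=
    List.pairwise_map.2 <| h.pairwise.imp_of_mem fun hp _ hpq => by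
      have := (h.1 _ hp).1
      omega
  have hsub : ivs.map Prod.fst ⊆ List.range u.length := fun a ha => by
    obtain ⟨p, hp, rfl⟩ := List.mem_map.1 ha
    have := h.1 p hp
    exact List.mem_range.2 (by omega)
  simpa using (hstarts.nodup.subperm hsub).length_le

theorem validPlacement_append_singleton {u : List α} {ivs : List (ℕ × ℕ)} {a b : ℕ} :
    ValidPlacement u (ivs ++ [(a, b)]) ↔
      ValidPlacement (u.take a) ivs ∧ a < b ∧ b ≤ u.length := by
  simp only [ValidPlacement, List.length_take, le_min_iff]
  constructor
  · intro h
    have hlast := h.1 (a, b) (by simp)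
    have hbefore : ∀ p ∈ ivs, p.2 ≤ a := fun p hp =>
      (List.pairwise_append.1 (ValidPlacement.pairwise h)).2.2 p hp _ (List.mem_singleton_self _)
    exact ⟨⟨fun p hp => ⟨(h.1 p (by simp [hp])).1, hbefore p hp, (h.1 p (by simp [hp])).2⟩,
      h.2.left_of_append⟩, hlast⟩
  · rintro ⟨⟨hv, hc⟩, hab, hbu⟩
    refine ⟨fun p hp => ?_, hc.append (List.isChain_singleton _) fun x hx y hy => ?_⟩
    · rcases List.mem_append.1 hp with hp | hp
      · exact ⟨(hv p hp).1, (hv p hp).2.2⟩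
      · rw [List.mem_singleton.1 hp]
        exact ⟨hab, hbu⟩
    · rw [← Option.mem_some_iff.1 hy]
      exact (hv x (List.mem_of_mem_getLast? hx)).2.1

theorem ValidPlacement.of_length_le {v w : List α} {ivs : List (ℕ × ℕ)}
    (h : ValidPlacement v ivs) (hvw : v.length ≤ w.length) : ValidPlacement w ivs :=
  ⟨fun p hp => ⟨(h.1 p hp).1, (h.1 p hp).2.trans hvw⟩, h.2⟩

theorem cost_take {u : List α} {ivs : List (ℕ × ℕ)} {i : ℕ}
    (h : ValidPlacement (u.take i) ivs) :
    cost f (u.take i) ivs = cost f u ivs := by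
  unfold cost
  congr 1
  refine List.map_congr_left fun p hp => ?_
  have := (h.1 p hp).2
  rw [List.length_take] at this
  rw [List.drop_take, List.take_take, min_eq_left (by omega)]

def placementCosts (u : List α) (m : ℕ) : Set ℕ :=
  {c | ∃ ivs, ivs.length = m ∧ ValidPlacement u ivs ∧ c = cost f u ivs}

def substringCosts (u : List α) : Set ℕ :=
  {c | ∃ a b : ℕ, a < b ∧ b ≤ u.length ∧ c = f ((u.drop a).take (b - a))}

theorem opt_eq_sInf (u : List α) (m : ℕ) : Opt f u m = sInf (placementCosts f u m) := rfl

theorem opt1_eq_sInf (u : List α) : Opt1 f u = sInf (substringCosts f u) := rfl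

theorem placementCosts_nonempty_iff {u : List α} {m : ℕ} :
    (placementCosts f u m).Nonempty ↔ m ≤ u.length := by
  refine ⟨fun ⟨_, ivs, hlen, hv, _⟩ => hlen ▸ hv.length_le, fun hm => ?_⟩
  refine ⟨_, (List.range m).map fun j => (j, j + 1), by simp, ⟨?_, ?_⟩, rfl⟩
  · simp only [List.mem_map, List.mem_range]
    rintro _ ⟨j, hj, rfl⟩
    exact ⟨by omega, by omega⟩
  · exact List.Pairwise.isChain (List.pairwise_map.2 (List.pairwise_lt_range (n := m)))

theorem substringCosts_nonempty_iff {u : List α} :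
    (substringCosts f u).Nonempty ↔ 0 < u.length :=
  ⟨fun ⟨_, _, _, hab, hb, _⟩ => by omega, fun h => ⟨_, 0, 1, zero_lt_one, h, rfl⟩⟩

theorem splitCosts_nonempty_iff {u : List α} {m i : ℕ} :
    (placementCosts f (u.take i) m + substringCosts f (u.drop i)).Nonempty ↔
      m ≤ i ∧ i < u.length := by
  rw [Set.add_nonempty, placementCosts_nonempty_iff, substringCosts_nonempty_iff, List.length_take,
    List.length_drop]
  omega

theorem placementCosts_zero (u : List α) : placementCosts f u 0 = {0} := by
  ext c
  simp only [placementCosts, List.length_eq_zero_iff, Set.mem_singleton_iff]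
  constructor
  · rintro ⟨_, rfl, _, rfl⟩
    rfl
  · rintro rfl
    exact ⟨[], rfl, ⟨by simp, List.isChain_nil⟩, rfl⟩

theorem placementCosts_one (u : List α) : placementCosts f u 1 = substringCosts f u := by
  ext c
  constructor
  · rintro ⟨ivs, hlen, hv, rfl⟩
    obtain ⟨⟨a, b⟩, rfl⟩ := List.length_eq_one_iff.1 hlen
    obtain ⟨hab, hbu⟩ := hv.1 _ (List.mem_singleton_self _)
    exact ⟨a, b, hab, hbu, by simp [cost]⟩
  · rintro ⟨a, b, hab, hbu, rfl⟩
    refine ⟨[(a, b)], rfl, ?_, by simp [cost]⟩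
    exact validPlacement_append_singleton.2 ⟨⟨by simp, List.isChain_nil⟩, hab, hbu⟩

theorem placementCosts_succ (u : List α) (m : ℕ) :
    placementCosts f u (m + 1) =
      ⋃ i, placementCosts f (u.take i) m + substringCosts f (u.drop i) := by
  ext c
  simp only [Set.mem_iUnion, Set.mem_add]
  constructor
  · rintro ⟨ivs, hlen, hv, rfl⟩
    obtain ⟨ivs, ⟨a, b⟩, rfl⟩ :=
      (List.eq_nil_or_concat' ivs).resolve_left (by rintro rfl; simp at hlen)
    obtain ⟨hv, hab, hbu⟩ := validPlacement_append_singleton.1 hv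
    refine ⟨a, _, ⟨ivs, by simpa using hlen, hv, rfl⟩, _,
      ⟨0, b - a, by omega, by simp only [List.length_drop]; omega, rfl⟩, ?_⟩
    rw [cost_take f hv]
    simp [cost]
  · rintro ⟨i, _, ⟨ivs, hlen, hv, rfl⟩, _, ⟨a, b, hab, hbu, rfl⟩, rfl⟩
    rw [List.length_drop] at hbu
    have hv' : ValidPlacement (u.take (i + a)) ivs :=
      hv.of_length_le (by simp only [List.length_take]; omega)
    refine ⟨ivs ++ [(i + a, i + b)], by simp [hlen],
      validPlacement_append_singleton.2 ⟨hv', by omega, by omega⟩, ?_⟩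
    rw [cost_take f hv]
    simp [cost, List.drop_drop, Nat.add_sub_add_left]

end Placements

theorem optRec_correct_general {α : Type*} (f : List α → ℕ) (u : List α) (m : ℕ) :
    OptRec f m u = Opt f u m := by
  induction m using Nat.twoStepInduction generalizing u with
  | zero => rw [OptRec, opt_eq_sInf, placementCosts_zero, csInf_singleton]
  | one => rw [OptRec, opt_eq_sInf, placementCosts_one, opt1_eq_sInf]
  | more k _ ih =>
    rw [OptRec, opt_eq_sInf, placementCosts_succ, Nat.sInf_iUnion]
    congr 1
    ext c
    simp only [← and_assoc]
    refine exists_congr fun i => ?_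
    rw [← splitCosts_nonempty_iff f]
    refine and_congr_right fun hi => ?_
    rw [Nat.csInf_add (Set.add_nonempty.1 hi).1 (Set.add_nonempty.1 hi).2, ← opt_eq_sInf,
      ← opt1_eq_sInf, ih]

/-- Correctness of the dynamic program: for any cost function `f` and any `m ≥ 1` with
`m ≤ |u|`, the value computed by the divider recurrence equals the true minimum total cost
over all placements of `m` disjoint ordered seeds in `u`. -/
theorem optRec_correct {α : Type*} (f : List α → ℕ) (u : List α) (m : ℕ)
    (hm : 1 ≤ m) (hlen : m ≤ u.length) :
    OptRec f m u = Opt f u m :=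
  optRec_correct_general f u m
end
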